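/- arXiv:math/0609140 — 5 statements merged into one kernel-verified Lean document; each statement's English description precedes it below -/
import Mathlib

section
/- Let l_1 ≤ ... ≤ l_n be positive reals, and suppose the two-element set {n-2, n-1} is long and the singleton {n} is short. Then the length vector is generic, i.e. for no choice of signs ε_i ∈ {±1} does ∑ ε_i l_i = 0. -/
/-!
Split the indices by sign: a vanishing signed sum means both sign classes carry exactly half of
the total length. Two of the three largest indices `n - 2, n - 1, n` have the same sign, so by
monotonicity that class has length at least `l (n - 2) + l (n - 1)`, which exceeds half of the
total because `{n - 2, n - 1}` is long.
-/

open Finset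

variable {ι : Type*}

theorem two_mul_sum_filter_eq_sum_of_signed_sum_eq_zero (s : Finset ι) (l ε : ι → ℝ)
    (hε : ∀ i ∈ s, ε i = 1 ∨ ε i = -1) (hsum : ∑ i ∈ s, ε i * l i = 0)
    {c : ℝ} (hc : c = 1 ∨ c = -1) :
    2 * ∑ i ∈ s with ε i = c, l i = ∑ i ∈ s, l i := by
  have hc2 : c * c = 1 := by rcases hc with rfl | rfl <;> norm_num
  -- `1 + c * ε i` is `2` on the sign class of `c` and `0` off it
  have key : ∑ i ∈ s, l i + c * ∑ i ∈ s, ε i * l i = 2 * ∑ i ∈ s with ε i = c, l i := by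
    rw [sum_filter, mul_sum, mul_sum, ← sum_add_distrib]
    refine sum_congr rfl fun i hi => ?_
    split_ifs with h
    · rw [h]; linear_combination l i * hc2
    · have hneg : ε i = -c := by
        rcases hε i hi with h' | h' <;> rcases hc with rfl | rfl <;> simp_all
      rw [hneg]; linear_combination (-l i) * hc2
  rw [← key, hsum, mul_zero, add_zero]

theorem Monotone.apply_add_apply_succ_le {l : ℕ → ℝ} (hl : Monotone l) {m a b : ℕ}
    (ha : m ≤ a) (hb : m ≤ b) (hab : a ≠ b) : l m + l (m + 1) ≤ l a + l b := by
  rcases hab.lt_or_gt with h | h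
  · linarith [hl ha, hl (show m + 1 ≤ b by omega)]
  · linarith [hl hb, hl (show m + 1 ≤ a by omega)]

theorem exists_ne_sign_eq_of_three {ε : ℕ → ℝ} (m : ℕ)
    (hε : ∀ i ∈ ({m, m + 1, m + 2} : Finset ℕ), ε i = 1 ∨ ε i = -1) :
    ∃ a ∈ ({m, m + 1, m + 2} : Finset ℕ), ∃ b ∈ ({m, m + 1, m + 2} : Finset ℕ),
      a ≠ b ∧ ε a = ε b := by
  refine exists_ne_map_eq_of_card_lt_of_maps_to (t := {1, -1}) ?_ fun i hi => ?_
  · rw [card_pair (by norm_num), card_insert_of_notMem (by simp), card_pair (by omega)]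
    norm_num
  · simpa using hε i hi

theorem generic_of_long_pair_short_singleton_general (n : ℕ) (hn : 3 ≤ n) (l : ℕ → ℝ)
    (hl : ∀ i, 0 < l i) (hmono : Monotone l)
    (hlong : ∑ i ∈ Finset.Icc 1 n \ ({n - 2, n - 1} : Finset ℕ), l i <
      ∑ i ∈ ({n - 2, n - 1} : Finset ℕ), l i) :
    ∀ ε : ℕ → ℝ, (∀ i ∈ Finset.Icc 1 n, ε i = 1 ∨ ε i = -1) →
      ∑ i ∈ Finset.Icc 1 n, ε i * l i ≠ 0 := by
  intro ε hε hsum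
  have htop : ({n - 2, n - 2 + 1, n - 2 + 2} : Finset ℕ) ⊆ Icc 1 n := by
    intro i hi; simp only [mem_insert, mem_singleton] at hi; simp only [mem_Icc]; omega
  have hpair : ({n - 2, n - 1} : Finset ℕ) ⊆ Icc 1 n :=
    fun i hi => htop (by simp only [mem_insert, mem_singleton] at hi ⊢; omega)
  rw [sum_sdiff_eq_sub hpair, sum_pair (by omega)] at hlong
  obtain ⟨a, ha, b, hb, hab, hεab⟩ :=
    exists_ne_sign_eq_of_three (n - 2) fun i hi => hε i (htop hi)
  have hclass := two_mul_sum_filter_eq_sum_of_signed_sum_eq_zero _ l ε hε hsum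
    (hε a (htop ha))
  have hab_le : l a + l b ≤ ∑ i ∈ Icc 1 n with ε i = ε a, l i :=
    add_le_sum (fun i _ => (hl i).le) (mem_filter.2 ⟨htop ha, rfl⟩)
      (mem_filter.2 ⟨htop hb, hεab.symm⟩) hab
  have hbig : l (n - 2) + l (n - 1) ≤ l a + l b := by
    simp only [mem_insert, mem_singleton] at ha hb
    rw [show n - 1 = n - 2 + 1 by omega]
    exact hmono.apply_add_apply_succ_le (by omega) (by omega) hab
  linarith

/-- If `{n-2, n-1}` is long and `{n}` is short for a sorted positive length
vector, then the length vector is generic: no signed sum vanishes. -/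
theorem generic_of_long_pair_short_singleton (n : ℕ) (hn : 3 ≤ n) (l : ℕ → ℝ)
    (hl : ∀ i, 0 < l i) (hmono : Monotone l)
    (hlong : ∑ i ∈ Finset.Icc 1 n \ ({n - 2, n - 1} : Finset ℕ), l i <
      ∑ i ∈ ({n - 2, n - 1} : Finset ℕ), l i)
    (hshort : ∑ i ∈ ({n} : Finset ℕ), l i < ∑ i ∈ Finset.Icc 1 n \ {n}, l i) :
    ∀ ε : ℕ → ℝ, (∀ i ∈ Finset.Icc 1 n, ε i = 1 ∨ ε i = -1) →
      ∑ i ∈ Finset.Icc 1 n, ε i * l i ≠ 0 :=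
  generic_of_long_pair_short_singleton_general n hn l hl hmono hlong
end

section
/- Let l_1 ≤ ... ≤ l_n be positive reals such that {n-2,n-1} is long and {n} is short. Then a subset J ⊆ {1,...,n} containing n is short if and only if J contains neither n-2 nor n-1. -/
/-!
Since `{n-2, n-1}` is long, so is every set `{k, n}` with `k ∈ {n-2, n-1}`, because `l` is monotone;
a set containing a long set is never short. Conversely, a set avoiding `n-2` and `n-1` lies in the
complement of the long set `{n-2, n-1}`, which is short, and subsets of short sets are short.
-/

open Finset

section LengthVector

variable {ι : Type*} [DecidableEq ι] (S : Finset ι) (l : ι → ℝ)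

def IsShort (J : Finset ι) : Prop := ∑ i ∈ J, l i < ∑ i ∈ S \ J, l i

def IsLong (J : Finset ι) : Prop := ∑ i ∈ S \ J, l i < ∑ i ∈ J, l i

variable {S l} {J K : Finset ι}

theorem isShort_iff (hJ : J ⊆ S) : IsShort S l J ↔ 2 * ∑ i ∈ J, l i < ∑ i ∈ S, l i := by
  rw [IsShort, ← sum_sdiff hJ]
  constructor <;> intro h <;> linarith

theorem isLong_iff (hJ : J ⊆ S) : IsLong S l J ↔ ∑ i ∈ S, l i < 2 * ∑ i ∈ J, l i := by
  rw [IsLong, ← sum_sdiff hJ]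
  constructor <;> intro h <;> linarith

theorem IsShort.mono (hl : ∀ i ∈ S, 0 ≤ l i) (hK : K ⊆ S) (hJK : J ⊆ K)
    (hKs : IsShort S l K) : IsShort S l J := by
  rw [isShort_iff hK] at hKs
  rw [isShort_iff (hJK.trans hK)]
  have := sum_le_sum_of_subset_of_nonneg hJK fun i hi _ => hl i (hK hi)
  linarith

theorem IsLong.isShort_sdiff (hJ : J ⊆ S) (hJl : IsLong S l J) : IsShort S l (S \ J) := by
  rwa [IsShort, Finset.sdiff_sdiff_eq_self hJ]

theorem IsLong.of_sum_le (hJ : J ⊆ S) (hK : K ⊆ S) (hJl : IsLong S l J)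
    (hJK : ∑ i ∈ J, l i ≤ ∑ i ∈ K, l i) : IsLong S l K := by
  rw [isLong_iff hJ] at hJl
  rw [isLong_iff hK]
  linarith

theorem IsLong.not_isShort_of_subset (hl : ∀ i ∈ S, 0 ≤ l i) (hJ : J ⊆ S) (hKJ : K ⊆ J)
    (hKl : IsLong S l K) : ¬IsShort S l J := by
  rw [isLong_iff (hKJ.trans hJ)] at hKl
  rw [isShort_iff hJ, not_lt]
  have := sum_le_sum_of_subset_of_nonneg hKJ fun i hi _ => hl i (hJ hi)
  linarith

end LengthVector

theorem short_iff_avoids_long_pair_general (n : ℕ) (hn : 3 ≤ n) (l : ℕ → ℝ)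
    (hl : ∀ i, 0 < l i) (hmono : Monotone l)
    (hlong : ∑ i ∈ Finset.Icc 1 n \ ({n - 2, n - 1} : Finset ℕ), l i <
      ∑ i ∈ ({n - 2, n - 1} : Finset ℕ), l i) :
    ∀ J : Finset ℕ, J ⊆ Finset.Icc 1 n → n ∈ J →
      ((∑ i ∈ J, l i < ∑ i ∈ Finset.Icc 1 n \ J, l i) ↔
        (n - 2 ∉ J ∧ n - 1 ∉ J)) := by
  intro J hJ hnJ
  have hl0 : ∀ i ∈ Icc 1 n, 0 ≤ l i := fun i _ => (hl i).le
  have hpair : ({n - 2, n - 1} : Finset ℕ) ⊆ Icc 1 n := by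
    intro i hi
    simp only [mem_insert, mem_singleton, mem_Icc] at hi ⊢
    omega
  have hPl : IsLong (Icc 1 n) l {n - 2, n - 1} := hlong
  have not_short_of_mem : ∀ k ∈ ({n - 2, n - 1} : Finset ℕ), k ∈ J → ¬IsShort (Icc 1 n) l J := by
    intro k hk hkJ
    have hkn : k ≠ n := by simp only [mem_insert, mem_singleton] at hk; omega
    have hkn_sub : ({k, n} : Finset ℕ) ⊆ J := insert_subset hkJ (singleton_subset_iff.2 hnJ)
    refine (hPl.of_sum_le hpair (hkn_sub.trans hJ) ?_).not_isShort_of_subset hl0 hJ hkn_sub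
    rw [sum_pair (by omega), sum_pair hkn]
    have h2 : l (n - 2) ≤ l n := hmono (by omega)
    have h1 : l (n - 1) ≤ l n := hmono (by omega)
    simp only [mem_insert, mem_singleton] at hk
    rcases hk with rfl | rfl <;> linarith
  constructor
  · intro hJs
    exact ⟨fun h => not_short_of_mem _ (by simp) h hJs, fun h => not_short_of_mem _ (by simp) h hJs⟩
  · rintro ⟨h2, h1⟩
    refine (hPl.isShort_sdiff hpair).mono hl0 sdiff_subset fun i hi => mem_sdiff.2 ⟨hJ hi, ?_⟩
    simp only [mem_insert, mem_singleton]
    rintro (rfl | rfl) <;> contradiction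

/-- If `{n-2, n-1}` is long and `{n}` is short, then a subset `J ⊆ {1,…,n}`
containing `n` is short iff it contains neither `n-2` nor `n-1`. -/
theorem short_iff_avoids_long_pair (n : ℕ) (hn : 3 ≤ n) (l : ℕ → ℝ)
    (hl : ∀ i, 0 < l i) (hmono : Monotone l)
    (hlong : ∑ i ∈ Finset.Icc 1 n \ ({n - 2, n - 1} : Finset ℕ), l i <
      ∑ i ∈ ({n - 2, n - 1} : Finset ℕ), l i)
    (hshort : ∑ i ∈ ({n} : Finset ℕ), l i < ∑ i ∈ Finset.Icc 1 n \ {n}, l i) :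
    ∀ J : Finset ℕ, J ⊆ Finset.Icc 1 n → n ∈ J →
      ((∑ i ∈ J, l i < ∑ i ∈ Finset.Icc 1 n \ J, l i) ↔
        (n - 2 ∉ J ∧ n - 1 ∉ J)) :=
  short_iff_avoids_long_pair_general n hn l hl hmono hlong
end

section
/- Let l_1 ≤ l_2 ≤ ... ≤ l_n be positive reals and let r = ⌊(n-1)/2⌋. Let S denote the number of short subsets of {1,...,n} containing n, and M the number of median subsets containing n. Then 2S + M ≤ 2^{n-1} - binom(n-1, r). -/
/-!
Put `t = l n` and, for `B ⊆ {1, …, n - 1}`, let `e B = ∑_{B} l - ∑_{Bᶜ} l`, one of the signed sums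
`±l 1 ± ⋯ ± l (n - 1)`. The set `B ∪ {n}` is short iff `e B < -t` and median iff `e B = -t`, and
`B ↦ Bᶜ` negates `e`, so there are as many short sets as sets with `e B > t`. Hence
`2S + M = 2^(n-1) - #{B | -t < e B ≤ t}`, and it remains to find `C(n - 1, r)` signed sums in the
window `(-t, t]`.

For this, sort the weights and split them as `P ++ Q` with `|Q| = 2k`. Fixing the sign of the first
weight `x` of `Q` splits the count of a window into the counts, over the remaining weights, of the
window shifted by `∓x`. By induction on `k` and `|P|`, every window of width `≥ 2t` meeting
`[-∑ P, ∑ P]` contains at least `C(|P| + 2k, k)` signed sums: one shifted window meets the interval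
of `P` without its last weight (same `k`), the other the interval of `P` extended by the second
weight of `Q` (with `k - 1`), and Pascal's rule adds the two bounds. For `k = 0` the signed sums
cannot jump over the window, since they run from `-∑ P` to `∑ P` in steps `2 l i ≤ 2t`.
-/

open Finset

namespace ShortSubsets

variable {ι : Type*}

lemma card_filter_partition {α : Type*} (u : Finset α) (f : α → ℝ) {t : ℝ} (ht : 0 ≤ t) :
    #{x ∈ u | f x < -t} + #{x ∈ u | f x = -t} + #{x ∈ u | -t < f x ∧ f x ≤ t} +
      #{x ∈ u | t < f x} = #u := by
  simp only [card_filter]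
  rw [← sum_add_distrib, ← sum_add_distrib, ← sum_add_distrib, card_eq_sum_ones]
  refine sum_congr rfl fun x _ => ?_
  split_ifs <;> grind

lemma exists_eq_cons_cons {Q : List ι} {k : ℕ} (hQ : Q.length = 2 * (k + 1)) :
    ∃ x y Q', Q = x :: y :: Q' ∧ Q'.length = 2 * k := by
  rcases Q with _ | ⟨x, _ | ⟨y, Q⟩⟩
  · simp at hQ
  · simp at hQ; omega
  · exact ⟨x, y, Q, rfl, by simp at hQ; omega⟩

structure SortedWeights (w : ι → ℝ) (t : ℝ) (L : List ι) : Prop where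
  nodup : L.Nodup
  sorted : L.Pairwise (fun i j => w i ≤ w j)
  nonneg : ∀ i ∈ L, 0 ≤ w i
  le : ∀ i ∈ L, w i ≤ t

namespace SortedWeights

variable {w : ι → ℝ} {t : ℝ}

lemma sublist {L L' : List ι} (hL : SortedWeights w t L) (h : L'.Sublist L) :
    SortedWeights w t L' :=
  ⟨hL.nodup.sublist h, hL.sorted.sublist h, fun i hi => hL.nonneg i (h.subset hi),
    fun i hi => hL.le i (h.subset hi)⟩

lemma le_of_append_cons_cons {P Q : List ι} {x y : ι} (hL : SortedWeights w t (P ++ x :: y :: Q)) :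
    (∀ a ∈ P, w a ≤ w x) ∧ w x ≤ w y := by
  obtain ⟨-, hxy, hPx⟩ := List.pairwise_append.1 hL.sorted
  exact ⟨fun a ha => hPx a ha x List.mem_cons_self, List.rel_of_pairwise_cons hxy List.mem_cons_self⟩

end SortedWeights

variable [DecidableEq ι]

def excess (w : ι → ℝ) (s B : Finset ι) : ℝ := ∑ i ∈ B, w i - ∑ i ∈ s \ B, w i

noncomputable def windowCount (w : ι → ℝ) (s : Finset ι) (α β : ℝ) : ℕ :=
  #{B ∈ s.powerset | α < excess w s B ∧ excess w s B ≤ β}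

variable {w : ι → ℝ}

lemma excess_sdiff {s B : Finset ι} (hB : B ⊆ s) : excess w s (s \ B) = -excess w s B := by
  rw [excess, excess, Finset.sdiff_sdiff_eq_self hB]
  ring

lemma excess_insert {s B : Finset ι} {a : ι} (ha : a ∉ s) (hB : B ⊆ s) :
    excess w (insert a s) B = excess w s B - w a := by
  rw [excess, excess, insert_sdiff_of_notMem _ (fun h => ha (hB h)),
    sum_insert (fun h => ha (mem_sdiff.1 h).1)]
  ring

lemma excess_insert_insert {s B : Finset ι} {a : ι} (ha : a ∉ s) (hB : B ⊆ s) :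
    excess w (insert a s) (insert a B) = excess w s B + w a := by
  rw [excess, excess, insert_sdiff_insert, sdiff_insert_of_notMem ha,
    sum_insert (fun h => ha (hB h))]
  ring

lemma card_filter_powerset_insert {s : Finset ι} {a : ι} (ha : a ∉ s) (p : Finset ι → Prop)
    [DecidablePred p] :
    #{B ∈ (insert a s).powerset | p B} =
      #{B ∈ s.powerset | p B} + #{B ∈ s.powerset | p (insert a B)} := by
  simp only [card_filter, sum_powerset_insert ha]

lemma card_filter_powerset_insert_mem {s : Finset ι} {a : ι} (ha : a ∉ s) (p : Finset ι → Prop)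
    [DecidablePred p] :
    #{B ∈ (insert a s).powerset | a ∈ B ∧ p B} = #{B ∈ s.powerset | p (insert a B)} := by
  rw [card_filter_powerset_insert ha, filter_eq_empty_iff.2, card_empty, zero_add]
  · simp only [mem_insert_self, true_and]
  · exact fun B hB h => ha (mem_powerset.1 hB h.1)

lemma card_filter_excess_neg (s : Finset ι) (p : ℝ → Prop) [DecidablePred p] :
    #{B ∈ s.powerset | p (excess w s B)} = #{B ∈ s.powerset | p (-excess w s B)} := by
  refine card_bij' (fun B _ => s \ B) (fun B _ => s \ B) ?_ ?_ ?_ ?_ <;> intro B hB <;>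
    rw [mem_filter, mem_powerset] at hB
  · simpa [excess_sdiff hB.1] using hB.2
  · simpa [excess_sdiff hB.1] using hB.2
  · exact Finset.sdiff_sdiff_eq_self hB.1
  · exact Finset.sdiff_sdiff_eq_self hB.1

lemma card_filter_short_insert {s : Finset ι} {a : ι} (ha : a ∉ s) :
    #{J ∈ (insert a s).powerset | a ∈ J ∧ ∑ i ∈ J, w i < ∑ i ∈ insert a s \ J, w i} =
      #{B ∈ s.powerset | excess w s B < -w a} := by
  rw [card_filter_powerset_insert_mem ha]
  refine congrArg card (filter_congr fun B hB => ?_)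
  rw [← sub_neg, ← excess, excess_insert_insert ha (mem_powerset.1 hB)]
  constructor <;> intro h <;> linarith

lemma card_filter_median_insert {s : Finset ι} {a : ι} (ha : a ∉ s) :
    #{J ∈ (insert a s).powerset | a ∈ J ∧ ∑ i ∈ J, w i = ∑ i ∈ insert a s \ J, w i} =
      #{B ∈ s.powerset | excess w s B = -w a} := by
  rw [card_filter_powerset_insert_mem ha]
  refine congrArg card (filter_congr fun B hB => ?_)
  rw [← sub_eq_zero, ← excess, excess_insert_insert ha (mem_powerset.1 hB)]
  constructor <;> intro h <;> linarith

lemma windowCount_insert {s : Finset ι} {a : ι} (ha : a ∉ s) (α β : ℝ) :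
    windowCount w (insert a s) α β =
      windowCount w s (α + w a) (β + w a) + windowCount w s (α - w a) (β - w a) := by
  rw [windowCount, card_filter_powerset_insert ha, windowCount, windowCount]
  congr 1 <;> refine congrArg card (filter_congr fun B hB => ?_) <;> rw [mem_powerset] at hB
  · rw [excess_insert ha hB]
    constructor <;> intro h <;> constructor <;> linarith [h.1, h.2]
  · rw [excess_insert_insert ha hB]
    constructor <;> intro h <;> constructor <;> linarith [h.1, h.2]

lemma windowCount_pos {s : Finset ι} {t α β : ℝ} (hnonneg : ∀ i ∈ s, 0 ≤ w i)
    (hle : ∀ i ∈ s, w i ≤ t) (hαβ : 2 * t ≤ β - α) (hα : α < ∑ i ∈ s, w i)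
    (hβ : -∑ i ∈ s, w i ≤ β) :
    0 < windowCount w s α β := by
  induction s using Finset.induction_on generalizing α β with
  | empty =>
    simp only [sum_empty, neg_zero] at hα hβ
    exact card_pos.2 ⟨∅, by simp [excess, hα, hβ]⟩
  | insert a s ha ih =>
    simp only [mem_insert, forall_eq_or_imp] at hnonneg hle
    rw [sum_insert ha] at hα hβ
    have hsum : 0 ≤ ∑ i ∈ s, w i := sum_nonneg hnonneg.2
    rw [windowCount_insert ha]
    by_cases h : -∑ i ∈ s, w i ≤ β - w a
    · exact Nat.add_pos_right _ <| ih hnonneg.2 hle.2 (by linarith) (by linarith) h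
    · exact Nat.add_pos_left (ih hnonneg.2 hle.2 (by linarith) (by linarith) (by linarith)) _

lemma windowCount_append_cons {P R : List ι} {x : ι} (h : (P ++ x :: R).Nodup) (α β : ℝ) :
    windowCount w (P ++ x :: R).toFinset α β =
      windowCount w (P ++ R).toFinset (α + w x) (β + w x) +
        windowCount w (P ++ R).toFinset (α - w x) (β - w x) := by
  have hx : x ∉ (P ++ R).toFinset := by
    rw [List.mem_toFinset]
    exact (List.nodup_cons.1 (List.nodup_middle.1 h)).1
  have hins : (P ++ x :: R).toFinset = insert x (P ++ R).toFinset := by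
    ext i
    simp only [List.mem_toFinset, List.mem_append, List.mem_cons, mem_insert]
    tauto
  rw [hins, windowCount_insert hx]

variable (w) in
def WindowBound (t : ℝ) (k : ℕ) (P : List ι) : Prop :=
  ∀ ⦃Q : List ι⦄ ⦃α β : ℝ⦄, SortedWeights w t (P ++ Q) → Q.length = 2 * k → 2 * t ≤ β - α →
    α < (P.map w).sum → -(P.map w).sum ≤ β →
    (P ++ Q).length.choose k ≤ windowCount w (P ++ Q).toFinset α β

variable {t : ℝ}

lemma windowBound_zero (P : List ι) : WindowBound w t 0 P := by
  intro Q α β hL hQ hαβ hα hβ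
  rw [List.length_eq_zero_iff.1 hQ, List.append_nil] at hL ⊢
  rw [← List.sum_toFinset _ hL.nodup] at hα hβ
  rw [Nat.choose_zero_right]
  exact windowCount_pos (fun i hi => hL.nonneg i (List.mem_toFinset.1 hi))
    (fun i hi => hL.le i (List.mem_toFinset.1 hi)) hαβ hα hβ

lemma windowBound_succ_nil {k : ℕ} (ih : ∀ P, WindowBound w t k P) :
    WindowBound w t (k + 1) [] := by
  intro Q α β hL hQ hαβ hα hβ
  obtain ⟨x, y, Q, rfl, hQk⟩ := exists_eq_cons_cons hQ
  obtain ⟨-, hxy⟩ := hL.le_of_append_cons_cons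
  have hx := hL.nonneg x (by simp)
  have hxt := hL.le x (by simp)
  have hchild : SortedWeights w t ([y] ++ Q) := hL.sublist (by simp)
  simp only [List.map_nil, List.sum_nil, neg_zero] at hα hβ
  have hplus := ih [y] (α := α + w x) (β := β + w x) hchild hQk (by linarith)
    (by simp; linarith) (by simp; linarith)
  have hminus := ih [y] (α := α - w x) (β := β - w x) hchild hQk (by linarith)
    (by simp; linarith) (by simp; linarith)
  have hlen : ([y] ++ Q).length = 2 * k + 1 := by simp [hQk]
  rw [windowCount_append_cons hL.nodup, List.nil_append, List.length_cons, ← List.singleton_append,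
    hlen, Nat.choose_succ_succ', Nat.choose_symm_half]
  rw [hlen] at hplus hminus
  exact add_le_add hplus hminus

lemma WindowBound.append_singleton {k : ℕ} {P : List ι} {a : ι} (ih : ∀ P, WindowBound w t k P)
    (ihP : WindowBound w t (k + 1) P) : WindowBound w t (k + 1) (P ++ [a]) := by
  intro Q α β hL hQ hαβ hα hβ
  obtain ⟨x, y, Q, rfl, hQk⟩ := exists_eq_cons_cons hQ
  obtain ⟨hPx, hxy⟩ := hL.le_of_append_cons_cons
  have hax := hPx a (by simp)
  have hx := hL.nonneg x (by simp)
  have hy := hL.nonneg y (by simp)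
  have hxt := hL.le x (by simp)
  have hσ : 0 ≤ (P.map w).sum :=
    List.sum_nonneg (List.forall_mem_map.2 fun i hi =>
      hL.nonneg i (List.mem_append_left _ (List.mem_append_left _ hi)))
  simp only [List.map_append, List.map_singleton, List.sum_append, List.sum_singleton] at hα hβ
  have hlist₁ : P ++ a :: y :: Q = P ++ [a] ++ y :: Q := by simp
  have hlist₂ : P ++ [a] ++ [y] ++ Q = P ++ [a] ++ y :: Q := by simp
  have hshort : SortedWeights w t (P ++ a :: y :: Q) := hL.sublist (by simp)
  have hlong : SortedWeights w t (P ++ [a] ++ [y] ++ Q) := hL.sublist (by simp)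
  rw [windowCount_append_cons hL.nodup,
    show (P ++ [a] ++ x :: y :: Q).length = (P ++ [a] ++ y :: Q).length + 1 by simp; ring,
    Nat.choose_succ_succ']
  by_cases hbr : w x - (P.map w).sum ≤ β
  · have hminus := ihP (α := α - w x) (β := β - w x) hshort (by simp [hQk]; ring)
      (by linarith) (by linarith) (by linarith)
    have hplus := ih (P ++ [a] ++ [y]) (α := α + w x) (β := β + w x) hlong hQk (by linarith)
      (by simp; linarith) (by simp; linarith)
    rw [hlist₁] at hminus
    rw [hlist₂] at hplus
    exact add_le_add hplus hminus
  · have hplus := ihP (α := α + w x) (β := β + w x) hshort (by simp [hQk]; ring)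
      (by linarith) (by linarith) (by linarith)
    have hminus := ih (P ++ [a] ++ [y]) (α := α - w x) (β := β - w x) hlong hQk (by linarith)
      (by simp; linarith) (by simp; linarith)
    rw [hlist₁] at hplus
    rw [hlist₂] at hminus
    rw [add_comm]
    exact add_le_add hplus hminus

theorem windowBound (k : ℕ) (P : List ι) : WindowBound w t k P := by
  induction k generalizing P with
  | zero => exact windowBound_zero P
  | succ k ih =>
    induction P using List.reverseRecOn with
    | nil => exact windowBound_succ_nil ih
    | append_singleton P a ihP => exact ihP.append_singleton ih

theorem choose_half_le_windowCount [LinearOrder ι] {s : Finset ι} (hw : MonotoneOn w s)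
    (hnonneg : ∀ i ∈ s, 0 ≤ w i) (hle : ∀ i ∈ s, w i ≤ t) (ht : 0 < t) :
    (#s).choose (#s / 2) ≤ windowCount w s (-t) t := by
  set L := s.sort (· ≤ ·)
  have hL : SortedWeights w t L :=
    ⟨sort_nodup _ _, (pairwise_sort _ _).imp_of_mem fun ha hb hab =>
      hw ((mem_sort _).1 ha) ((mem_sort _).1 hb) hab,
    fun i hi => hnonneg i ((mem_sort _).1 hi), fun i hi => hle i ((mem_sort _).1 hi)⟩
  set P := L.take (#s % 2)
  have hσ : 0 ≤ (P.map w).sum :=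
    List.sum_nonneg (List.forall_mem_map.2 fun i hi => hL.nonneg i (List.mem_of_mem_take hi))
  have hσt : (P.map w).sum ≤ t :=
    calc (P.map w).sum ≤ (P.map w).length • t :=
          List.sum_le_card_nsmul _ t (List.forall_mem_map.2 fun i hi =>
            hL.le i (List.mem_of_mem_take hi))
      _ ≤ 1 • t := by gcongr; simp [P]; omega
      _ = t := one_smul ℕ t
  have h := windowBound (w := w) (#s / 2) P (Q := L.drop (#s % 2)) (α := -t) (β := t)
    (by rwa [List.take_append_drop]) (by simp [L]; omega) (by linarith) (by linarith)
    (by linarith)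
  rwa [List.take_append_drop, length_sort, sort_toFinset] at h

end ShortSubsets

open ShortSubsets

/-- Upper bound on the total Betti number: for a sorted positive length
vector, twice the number of short subsets containing `n` plus the number of
median subsets containing `n` is at most `2^{n-1} - binom (n-1) ⌊(n-1)/2⌋`. -/
theorem total_betti_upper_bound (n : ℕ) (hn : 1 ≤ n) (l : ℕ → ℝ)
    (hl : ∀ i, 0 < l i) (hmono : Monotone l) :
    2 * ((Finset.Icc 1 n).powerset.filter (fun J => n ∈ J ∧
        (∑ i ∈ J, l i < ∑ i ∈ Finset.Icc 1 n \ J, l i))).card +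
      ((Finset.Icc 1 n).powerset.filter (fun J => n ∈ J ∧
        (∑ i ∈ J, l i = ∑ i ∈ Finset.Icc 1 n \ J, l i))).card ≤
    2 ^ (n - 1) - (n - 1).choose ((n - 1) / 2) := by
  obtain ⟨m, rfl⟩ : ∃ m, n = m + 1 := ⟨n - 1, by omega⟩
  set s := Icc 1 m
  have hs : Icc 1 (m + 1) = insert (m + 1) s := (insert_Icc_right_eq_Icc_add_one (by omega)).symm
  have hms : m + 1 ∉ s := by simp [s]
  rw [Nat.add_sub_cancel, hs, card_filter_short_insert hms, card_filter_median_insert hms]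
  set t := l (m + 1)
  have hmirror : #{B ∈ s.powerset | excess l s B < -t} = #{B ∈ s.powerset | t < excess l s B} := by
    rw [card_filter_excess_neg s (· < -t)]
    simp only [neg_lt_neg_iff]
  have hwindow : m.choose (m / 2) ≤ windowCount l s (-t) t := by
    simpa [s] using choose_half_le_windowCount (hmono.monotoneOn s) (fun i _ => (hl i).le)
      (fun i hi => hmono (by simp [s] at hi; omega)) (hl (m + 1))
  have hpartition := card_filter_partition s.powerset (excess l s) (t := t) (hl _).le
  rw [windowCount] at hwindow
  rw [card_powerset, Nat.card_Icc, Nat.add_sub_cancel] at hpartition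
  omega
end

section
/- Let n = 2r+2 be even and let l_1 ≤ ... ≤ l_n be a generic length vector (no signed sum ∑ ε_i l_i with ε_i = ±1 vanishes). Let S be the number of short subsets of {1,...,n} containing n. Then 2S ≤ 2^{n-1} - 2·binom(n-2, r). -/
/-!
Removing `n`, a short set `J ∋ n` is `insert n A` with `A ⊆ {1, …, n-1}` and signed sum
`D(A) = ∑_{i ∉ A} lᵢ - ∑_{i ∈ A} lᵢ > lₙ`. Complementation negates `D`, so twice the count equals
`2^(n-1)` minus the number `N(lₙ)` of `A` with `|D(A)| ≤ lₙ`. Adding the lengths one at a time,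
`N_{k+1}(c) = N_k(c - l_{k+1}) + N_k(c + l_{k+1})` as soon as `c ≥ l_{k+1}`; because the lengths
increase, a threshold `c ≥ (h+1)·l_k` behaves like height `h` of a `±1` walk that must stay
nonnegative, and there are `binom(2r, r)` such walks of length `2r` from height `0`.
-/

open Finset

theorem card_filter_powerset_insert {α : Type*} [DecidableEq α] {a : α} {s : Finset α}
    (ha : a ∉ s) (p : Finset α → Prop) [DecidablePred p] :
    #{t ∈ (insert a s).powerset | p t} =
      #{t ∈ s.powerset | p t} + #{t ∈ s.powerset | p (insert a t)} := by
  simp only [card_filter]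
  exact sum_powerset_insert ha _

section SignedSum

variable {α : Type*} [DecidableEq α] (l : α → ℝ)

def signedSum (s A : Finset α) : ℝ :=
  ∑ i ∈ s \ A, l i - ∑ i ∈ A, l i

variable {l}

theorem signedSum_insert {a : α} {s A : Finset α} (ha : a ∉ s) (hA : A ⊆ s) :
    signedSum l (insert a s) A = signedSum l s A + l a := by
  have haA : a ∉ A := fun h => ha (hA h)
  rw [signedSum, signedSum, insert_sdiff_of_notMem _ haA,
    sum_insert fun h => ha (mem_sdiff.1 h).1]
  ring

theorem signedSum_insert_insert {a : α} {s A : Finset α} (ha : a ∉ s) (hA : A ⊆ s) :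
    signedSum l (insert a s) (insert a A) = signedSum l s A - l a := by
  rw [signedSum, signedSum, insert_sdiff_insert, sdiff_insert_of_notMem ha,
    sum_insert fun h => ha (hA h)]
  ring

theorem signedSum_sdiff {s A : Finset α} (hA : A ⊆ s) :
    signedSum l s (s \ A) = -signedSum l s A := by
  rw [signedSum, signedSum, Finset.sdiff_sdiff_eq_self hA]
  ring

variable (l)

noncomputable def balancedCount (s : Finset α) (c : ℝ) : ℕ :=
  #{A ∈ s.powerset | |signedSum l s A| ≤ c}

variable {l}

theorem balancedCount_empty {c : ℝ} (hc : 0 ≤ c) : balancedCount l ∅ c = 1 := by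
  simp [balancedCount, signedSum, filter_singleton, hc]

theorem balancedCount_mono (s : Finset α) : Monotone (balancedCount l s) :=
  fun _ _ hcd => card_le_card (monotone_filter_right _ fun _ _ h => h.trans hcd)

theorem ite_abs_add_le_add_ite_abs_sub_le {x y c : ℝ} (hy : 0 ≤ y) (hyc : y ≤ c) :
    ((if |x + y| ≤ c then 1 else 0) + if |x - y| ≤ c then 1 else 0 : ℕ) =
      (if |x| ≤ c - y then 1 else 0) + if |x| ≤ c + y then 1 else 0 := by
  simp only [abs_le]
  split_ifs <;> first | rfl | (exfalso; grind)

theorem balancedCount_insert {a : α} {s : Finset α} {c : ℝ} (ha : a ∉ s) (h0 : 0 ≤ l a)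
    (hc : l a ≤ c) :
    balancedCount l (insert a s) c = balancedCount l s (c - l a) + balancedCount l s (c + l a) := by
  rw [balancedCount, card_filter_powerset_insert ha]
  simp only [balancedCount, card_filter, ← sum_add_distrib]
  refine sum_congr rfl fun A hA => ?_
  rw [signedSum_insert ha (mem_powerset.1 hA), signedSum_insert_insert ha (mem_powerset.1 hA)]
  exact ite_abs_add_le_add_ite_abs_sub_le h0 hc

theorem card_lt_signedSum_eq_card_signedSum_lt_neg (s : Finset α) (c : ℝ) :
    #{A ∈ s.powerset | c < signedSum l s A} = #{A ∈ s.powerset | signedSum l s A < -c} := by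
  refine card_nbij' (s \ ·) (s \ ·) ?_ ?_ ?_ ?_ <;> intro A hA <;>
    simp only [mem_coe, mem_filter, mem_powerset] at hA ⊢
  · exact ⟨sdiff_subset, by rw [signedSum_sdiff hA.1]; linarith⟩
  · exact ⟨sdiff_subset, by rw [signedSum_sdiff hA.1]; linarith⟩
  · exact Finset.sdiff_sdiff_eq_self hA.1
  · exact Finset.sdiff_sdiff_eq_self hA.1

theorem balancedCount_add_two_mul_card_lt_signedSum (s : Finset α) {c : ℝ} (hc : 0 ≤ c) :
    balancedCount l s c + 2 * #{A ∈ s.powerset | c < signedSum l s A} = 2 ^ #s := by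
  have hsplit : {A ∈ s.powerset | ¬|signedSum l s A| ≤ c} =
      {A ∈ s.powerset | c < signedSum l s A} ∪ {A ∈ s.powerset | signedSum l s A < -c} := by
    rw [← filter_or]
    exact filter_congr fun A _ => by rw [not_le, lt_abs, lt_neg]
  have hdisj : Disjoint {A ∈ s.powerset | c < signedSum l s A}
      {A ∈ s.powerset | signedSum l s A < -c} :=
    disjoint_filter.2 fun A _ h₁ h₂ => by linarith
  rw [← card_powerset,
    ← card_filter_add_card_filter_not (s := s.powerset) (fun A => |signedSum l s A| ≤ c), hsplit,
    card_union_of_disjoint hdisj, ← card_lt_signedSum_eq_card_signedSum_lt_neg, two_mul,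
    balancedCount]

theorem card_short_containing_insert {a : α} {s : Finset α} (ha : a ∉ s) :
    #{J ∈ (insert a s).powerset | a ∈ J ∧ ∑ i ∈ J, l i < ∑ i ∈ insert a s \ J, l i} =
      #{A ∈ s.powerset | l a < signedSum l s A} := by
  rw [card_filter_powerset_insert ha, filter_false_of_mem, card_empty, zero_add]
  · refine congrArg card (filter_congr fun A hA => ?_)
    rw [← sub_pos, ← signedSum, signedSum_insert_insert ha (mem_powerset.1 hA), sub_pos]
    simp
  · exact fun A hA h => ha (mem_powerset.1 hA h.1)

end SignedSum

/-- Reflection-principle closed form of the number of `±1` walks of length `L` from height `h` that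
never go below `0` (`A` is the set of down-steps). -/
def walkCount (L h : ℕ) : ℕ :=
  #{A ∈ (range L).powerset | L ≤ 2 * #A + h ∧ 2 * #A ≤ L + h + 1}

theorem walkCount_zero_left (h : ℕ) : walkCount 0 h = 1 := by
  simp [walkCount, filter_singleton]

theorem walkCount_succ_zero (L : ℕ) : walkCount (L + 1) 0 = walkCount L 1 := by
  rw [walkCount, range_add_one, card_filter_powerset_insert notMem_range_self]
  simp only [walkCount, card_filter, ← sum_add_distrib]
  refine sum_congr rfl fun A hA => ?_
  rw [card_insert_of_notMem fun hL => notMem_range_self (mem_powerset.1 hA hL)]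
  split_ifs <;> omega

theorem walkCount_succ_succ (L h : ℕ) :
    walkCount (L + 1) (h + 1) = walkCount L h + walkCount L (h + 2) := by
  rw [walkCount, range_add_one, card_filter_powerset_insert notMem_range_self]
  simp only [walkCount, card_filter, ← sum_add_distrib]
  refine sum_congr rfl fun A hA => ?_
  rw [card_insert_of_notMem fun hL => notMem_range_self (mem_powerset.1 hA hL)]
  split_ifs <;> omega

theorem walkCount_two_mul_zero (r : ℕ) : walkCount (2 * r) 0 = (2 * r).choose r := by
  conv_rhs => rw [← card_range (2 * r), ← card_powersetCard, powersetCard_eq_filter]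
  exact congrArg card (filter_congr fun A _ => by omega)

theorem two_mul_walkCount_le_balancedCount {l : ℕ → ℝ} (hl : ∀ i, 0 ≤ l i) (hmono : Monotone l)
    (k h : ℕ) {c : ℝ} (hc : (h + 1) * l (k + 1) ≤ c) :
    2 * walkCount k h ≤ balancedCount l (Icc 1 (k + 1)) c := by
  induction k generalizing h c with
  | zero =>
    have hlc : l 1 ≤ c := by nlinarith [hl 1, (h.cast_nonneg : (0 : ℝ) ≤ h)]
    rw [zero_add, Icc_self, ← insert_empty, balancedCount_insert (notMem_empty 1) (hl 1) hlc,
      balancedCount_empty (by linarith), balancedCount_empty (by linarith [hl 1]),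
      walkCount_zero_left]
  | succ k ih =>
    have hle : l (k + 1) ≤ l (k + 1 + 1) := hmono (by omega)
    have hlc : l (k + 1 + 1) ≤ c := by nlinarith [hl (k + 1 + 1), (h.cast_nonneg : (0 : ℝ) ≤ h)]
    have hnot : k + 1 + 1 ∉ Icc 1 (k + 1) := by simp
    rw [← insert_Icc_right_eq_Icc_add_one (by omega : 1 ≤ k + 1 + 1),
      balancedCount_insert hnot (hl _) hlc]
    cases h with
    | zero =>
      have := ih 1 (c := c + l (k + 1 + 1)) (by push_cast; linarith)
      rw [walkCount_succ_zero]
      omega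
    | succ h =>
      have hmul := mul_le_mul_of_nonneg_left hle (by positivity : (0 : ℝ) ≤ h + 1)
      have ih₁ := ih h (c := c - l (k + 1 + 1)) (by push_cast at hc ⊢; linarith)
      have ih₂ := ih (h + 2) (c := c + l (k + 1 + 1)) (by push_cast at hc ⊢; linarith)
      rw [walkCount_succ_succ]
      omega

theorem total_betti_upper_bound_generic_even_general (r : ℕ) (n : ℕ)
    (hn : n = 2 * r + 2) (l : ℕ → ℝ) (hl : ∀ i, 0 < l i) (hmono : Monotone l) :
    2 * ((Finset.Icc 1 n).powerset.filter (fun J => n ∈ J ∧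
        (∑ i ∈ J, l i < ∑ i ∈ Finset.Icc 1 n \ J, l i))).card ≤
    2 ^ (n - 1) - 2 * (n - 2).choose r := by
  subst hn
  have hnot : 2 * r + 2 ∉ Icc 1 (2 * r + 1) := by simp
  have hIcc : Icc 1 (2 * r + 2) = insert (2 * r + 2) (Icc 1 (2 * r + 1)) :=
    (insert_Icc_right_eq_Icc_add_one (by omega)).symm
  rw [hIcc, card_short_containing_insert hnot]
  have hpartition := balancedCount_add_two_mul_card_lt_signedSum (l := l) (Icc 1 (2 * r + 1))
    (hl (2 * r + 2)).le
  have hbalanced : 2 * (2 * r).choose r ≤ balancedCount l (Icc 1 (2 * r + 1)) (l (2 * r + 2)) :=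
    calc 2 * (2 * r).choose r = 2 * walkCount (2 * r) 0 := by rw [walkCount_two_mul_zero]
      _ ≤ balancedCount l (Icc 1 (2 * r + 1)) (l (2 * r + 1)) :=
        two_mul_walkCount_le_balancedCount (fun i => (hl i).le) hmono _ 0 (by simp)
      _ ≤ balancedCount l (Icc 1 (2 * r + 1)) (l (2 * r + 2)) :=
        balancedCount_mono _ (hmono (by omega))
  rw [Nat.card_Icc, Nat.add_sub_cancel] at hpartition
  rw [show 2 * r + 2 - 1 = 2 * r + 1 by omega, show 2 * r + 2 - 2 = 2 * r by omega]
  omega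

/-- Upper bound on the total Betti number in the generic even case: for
`n = 2r+2` and a generic sorted positive length vector, twice the number of
short subsets containing `n` is at most `2^{n-1} - 2·binom (n-2) r`. -/
theorem total_betti_upper_bound_generic_even (r : ℕ) (hr : 1 ≤ r) (n : ℕ)
    (hn : n = 2 * r + 2) (l : ℕ → ℝ) (hl : ∀ i, 0 < l i) (hmono : Monotone l)
    (hgen : ∀ ε : ℕ → ℝ, (∀ i ∈ Finset.Icc 1 n, ε i = 1 ∨ ε i = -1) →
      ∑ i ∈ Finset.Icc 1 n, ε i * l i ≠ 0) :
    2 * ((Finset.Icc 1 n).powerset.filter (fun J => n ∈ J ∧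
        (∑ i ∈ J, l i < ∑ i ∈ Finset.Icc 1 n \ J, l i))).card ≤
    2 ^ (n - 1) - 2 * (n - 2).choose r :=
  total_betti_upper_bound_generic_even_general r n hn l hl hmono
end

section
/- Let l_1 ≤ ... ≤ l_n be positive reals, 1 ≤ i ≤ ⌊(n-1)/2⌋ + 1, and set r = ⌊(n-1)/2⌋. Let S_i be the number of short subsets of {1,...,n} containing {n-i+1,...,n}, and M_i the number of median subsets containing {n-i+1,...,n}. Then 2·S_i + M_i ≤ 2^{n-i} - ∑_{j=r-i+1}^{r} binom(n-i, j). -/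
open Finset

/-!
Put `m = n - i` and let `T = {m+1, …, n}`, of total length `t ≥ i·l_{m+1}`. The sets `J ⊇ T`
are the `A ∪ T` with `A ⊆ {1, …, m}`, and the slack `∑_{j ∉ J} l_j - ∑_{j ∈ J} l_j` of `A ∪ T`
is `∑_{j ≤ m} l_j - t - 2 ∑_{j ∈ A} l_j`. Weighting short sets by 2 and median sets by 1, the
total weight `W(m, t)` of these sets satisfies `W(m+1, t) = W(m, t - l_{m+1}) + W(m, t + l_{m+1})`
(according as `m+1 ∉ A` or `m+1 ∈ A`), and `W(m, t) ≤ W(m, 0) = 2^m` for `t ≥ 0`, because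
complementing `A` negates the slack when `t = 0`. Since `l` is sorted and positive, induction on
`m` bounds `W(m, t)` by its value for unit lengths and `t = i`, a sum of binomial coefficients
which the symmetry `binom(m, k) = binom(m, m - k)` identifies with `2^m` minus the central window
`∑_{r-i < k ≤ r} binom(m, k)`.
-/

noncomputable def slackWeight (d : ℝ) : ℕ := if 0 < d then 2 else if d = 0 then 1 else 0

lemma slackWeight_mono : Monotone slackWeight := by
  intro a b hab
  unfold slackWeight
  split_ifs <;> grind

lemma slackWeight_of_neg {d : ℝ} (hd : d < 0) : slackWeight d = 0 := by
  simp [slackWeight, hd.not_gt, hd.ne]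

lemma slackWeight_add_slackWeight_neg (d : ℝ) : slackWeight d + slackWeight (-d) = 2 := by
  unfold slackWeight
  split_ifs <;> grind

lemma slackWeight_natCast_sub (a b : ℕ) :
    slackWeight ((a : ℝ) - b) = (if b < a then 1 else 0) + (if b ≤ a then 1 else 0) := by
  unfold slackWeight
  simp only [sub_pos, sub_eq_zero, Nat.cast_lt, Nat.cast_inj]
  split_ifs <;> omega

lemma two_mul_card_filter_lt_add_card_filter_eq {α : Type*} (s : Finset α) (f g : α → ℝ) :
    2 * #{x ∈ s | f x < g x} + #{x ∈ s | f x = g x} = ∑ x ∈ s, slackWeight (g x - f x) := by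
  rw [card_filter, card_filter, mul_sum, ← sum_add_distrib]
  refine sum_congr rfl fun x _ => ?_
  unfold slackWeight
  split_ifs <;> grind

section
variable {α : Type*} (l : α → ℝ)

noncomputable def slackWeightSum (B : Finset α) (t : ℝ) : ℕ :=
  ∑ A ∈ B.powerset, slackWeight (∑ j ∈ B, l j - t - 2 * ∑ j ∈ A, l j)

lemma sum_Icc_slackWeight_eq_slackWeightSum [DecidableEq α] {T U : Finset α} (hTU : T ⊆ U) :
    ∑ J ∈ Icc T U, slackWeight (∑ j ∈ U \ J, l j - ∑ j ∈ J, l j) =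
      slackWeightSum l (U \ T) (∑ j ∈ T, l j) := by
  rw [Icc_eq_image_powerset hTU, sum_image]
  · refine sum_congr rfl fun A hA => ?_
    have hA : A ⊆ U \ T := mem_powerset.mp hA
    have hdisj : Disjoint T A := disjoint_of_subset_right hA disjoint_sdiff
    rw [sdiff_union_distrib, ← Finset.sdiff_sdiff_left', sum_union hdisj, sum_sdiff_eq_sub hA]
    ring_nf
  · intro A hA A' hA' h
    have hA : Disjoint T A := disjoint_of_subset_right (mem_powerset.mp hA) disjoint_sdiff
    have hA' : Disjoint T A' := disjoint_of_subset_right (mem_powerset.mp hA') disjoint_sdiff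
    simpa [union_sdiff_cancel_left hA, union_sdiff_cancel_left hA'] using congrArg (· \ T) h

lemma slackWeightSum_insert [DecidableEq α] {a : α} {B : Finset α} (ha : a ∉ B) (t : ℝ) :
    slackWeightSum l (insert a B) t =
      slackWeightSum l B (t - l a) + slackWeightSum l B (t + l a) := by
  unfold slackWeightSum
  rw [sum_powerset_insert ha, sum_insert ha]
  congr 1 <;> refine sum_congr rfl fun A hA => ?_
  · ring_nf
  · rw [sum_insert fun h => ha (mem_powerset.mp hA h)]
    ring_nf

lemma slackWeightSum_antitone (B : Finset α) : Antitone (slackWeightSum l B) :=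
  fun _ _ hst => sum_le_sum fun _ _ => slackWeight_mono (by linarith)

lemma slackWeightSum_zero [DecidableEq α] (B : Finset α) : slackWeightSum l B 0 = 2 ^ #B := by
  have hcompl : slackWeightSum l B 0 =
      ∑ A ∈ B.powerset, slackWeight (-(∑ j ∈ B, l j - 0 - 2 * ∑ j ∈ A, l j)) := by
    refine sum_nbij' (B \ ·) (B \ ·) ?_ ?_ ?_ ?_ ?_ <;> intro A hA <;>
      simp only [mem_powerset] at hA ⊢
    · exact sdiff_subset
    · exact sdiff_subset
    · exact Finset.sdiff_sdiff_eq_self hA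
    · exact Finset.sdiff_sdiff_eq_self hA
    · rw [sum_sdiff_eq_sub hA]
      ring_nf
  have h2 : 2 * slackWeightSum l B 0 = 2 * 2 ^ #B := by
    rw [two_mul]
    nth_rewrite 2 [hcompl]
    rw [slackWeightSum, ← sum_add_distrib]
    simp only [slackWeight_add_slackWeight_neg, sum_const, card_powerset, smul_eq_mul, mul_comm]
  omega

lemma slackWeightSum_empty (t : ℝ) : slackWeightSum l ∅ t = slackWeight (-t) := by
  simp [slackWeightSum]

end

theorem slackWeightSum_Icc_le_const {l : ℕ → ℝ} (hl : ∀ j, 0 < l j) (hmono : Monotone l) :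
    ∀ (m i : ℕ) (t : ℝ), i * l (m + 1) ≤ t →
      slackWeightSum l (Icc 1 m) t ≤ slackWeightSum (fun _ => 1) (Icc 1 m) i
  | m, 0, t, ht => by
    rw [Nat.cast_zero, slackWeightSum_zero, ← slackWeightSum_zero l]
    exact slackWeightSum_antitone l _ (by simpa using ht)
  | 0, i + 1, t, ht => by
    have ht : 0 < t := lt_of_lt_of_le (by have := hl 1; positivity) ht
    simp [slackWeightSum_empty, slackWeight_of_neg (neg_neg_of_pos ht)]
  | m + 1, i + 1, t, ht => by
    have ht : (i + 1) * l (m + 1) ≤ t := by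
      push_cast at ht
      nlinarith [hmono (Nat.le_succ (m + 1))]
    have hlow := slackWeightSum_Icc_le_const hl hmono m i (t - l (m + 1)) (by linarith)
    have hhigh := slackWeightSum_Icc_le_const hl hmono m (i + 2) (t + l (m + 1)) (by
      push_cast
      linarith)
    rw [← insert_Icc_right_eq_Icc_add_one (by omega), slackWeightSum_insert _ (by simp),
      slackWeightSum_insert _ (by simp)]
    have hcast_pred : ((i + 1 : ℕ) : ℝ) - 1 = i := by push_cast; ring
    have hcast_succ : ((i + 1 : ℕ) : ℝ) + 1 = (i + 2 : ℕ) := by push_cast; ring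
    rw [hcast_pred, hcast_succ]
    exact add_le_add hlow hhigh

lemma slackWeightSum_one_Icc_eq_sum_choose (m : ℕ) (i : ℕ) :
    slackWeightSum (fun _ => (1 : ℝ)) (Icc 1 m) i =
      ∑ k ∈ range (m + 1), m.choose k * slackWeight (m - (2 * k + i : ℕ)) := by
  have hcard : #(Icc 1 m) = m := by simp
  simp only [slackWeightSum, sum_const, nsmul_one, hcard]
  have h := sum_powerset_apply_card (fun k => slackWeight (m - (2 * k + i : ℕ))) (x := Icc 1 m)
  simp only [hcard, smul_eq_mul] at h
  rw [← h]
  refine sum_congr rfl fun A _ => ?_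
  push_cast
  ring_nf

lemma sum_choose_mul_slackWeight_add_sum_choose_Icc {m i r : ℕ} (hr : r = (m + i - 1) / 2) :
    ∑ k ∈ range (m + 1), m.choose k * slackWeight (m - (2 * k + i : ℕ)) +
      ∑ k ∈ Icc (r + 1 - i) r, m.choose k = 2 ^ m := by
  have hreflect : ∑ k ∈ range (m + 1), m.choose k * (if 2 * k + i ≤ m then 1 else 0) =
      ∑ k ∈ range (m + 1), m.choose k * (if m + i ≤ 2 * k then 1 else 0) := by
    rw [← sum_range_reflect]
    refine sum_congr rfl fun k hk => ?_
    rw [mem_range] at hk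
    rw [add_tsub_cancel_right, Nat.choose_symm (by omega)]
    congr 1
    exact if_congr (by omega) rfl rfl
  have hwindow : ∑ k ∈ Icc (r + 1 - i) r, m.choose k =
      ∑ k ∈ range (m + 1), m.choose k * (if r + 1 - i ≤ k ∧ k ≤ r then 1 else 0) := by
    simp only [mul_ite, mul_one, mul_zero, ← sum_filter]
    refine (sum_subset (fun k hk => by simp_all) fun k hk hk' => ?_).symm
    exact Nat.choose_eq_zero_of_lt (by simp_all)
  simp only [slackWeight_natCast_sub, mul_add, sum_add_distrib, hreflect, hwindow]
  rw [← Nat.sum_range_choose, ← sum_add_distrib, ← sum_add_distrib]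
  refine sum_congr rfl fun k _ => ?_
  rw [← mul_add, ← mul_add]
  convert mul_one (m.choose k) using 2
  split_ifs <;> omega

theorem short_median_intermediate_bound_general (n : ℕ) (hn : 1 ≤ n) (l : ℕ → ℝ)
    (hl : ∀ i, 0 < l i) (hmono : Monotone l)
    (r : ℕ) (hr : r = (n - 1) / 2) (i : ℕ) (hi2 : i ≤ r + 1) :
    2 * ((Finset.Icc 1 n).powerset.filter (fun J =>
        Finset.Icc (n - i + 1) n ⊆ J ∧
        (∑ j ∈ J, l j < ∑ j ∈ Finset.Icc 1 n \ J, l j))).card +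
      ((Finset.Icc 1 n).powerset.filter (fun J =>
        Finset.Icc (n - i + 1) n ⊆ J ∧
        (∑ j ∈ J, l j = ∑ j ∈ Finset.Icc 1 n \ J, l j))).card ≤
    2 ^ (n - i) - ∑ j ∈ Finset.Icc (r + 1 - i) r, (n - i).choose j := by
  have hT : Icc (n - i + 1) n ⊆ Icc 1 n := Icc_subset_Icc_left (by omega)
  have hcompl : Icc 1 n \ Icc (n - i + 1) n = Icc 1 (n - i) := by
    ext j
    simp only [mem_sdiff, mem_Icc]
    omega
  have ht : (i : ℝ) * l (n - i + 1) ≤ ∑ j ∈ Icc (n - i + 1) n, l j := by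
    have h := card_nsmul_le_sum (Icc (n - i + 1) n) l (l (n - i + 1))
      fun j hj => hmono (mem_Icc.mp hj).1
    simpa [show n + 1 - (n - i + 1) = i by omega] using h
  rw [← filter_filter, ← filter_filter, ← Icc_eq_filter_powerset,
    two_mul_card_filter_lt_add_card_filter_eq, sum_Icc_slackWeight_eq_slackWeightSum l hT, hcompl]
  have hle := slackWeightSum_Icc_le_const hl hmono (n - i) i _ ht
  have hsum := sum_choose_mul_slackWeight_add_sum_choose_Icc (m := n - i) (i := i) (r := r)
    (by omega)
  rw [slackWeightSum_one_Icc_eq_sum_choose] at hle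
  omega

/-- Inductive inequality: for a sorted positive length vector, with
`r = ⌊(n-1)/2⌋` and `1 ≤ i ≤ r+1`, twice the number of short subsets
containing the top `i` indices plus the number of median subsets containing
them is at most `2^{n-i} - ∑_{j=r-i+1}^{r} binom (n-i) j`. -/
theorem short_median_intermediate_bound (n : ℕ) (hn : 1 ≤ n) (l : ℕ → ℝ)
    (hl : ∀ i, 0 < l i) (hmono : Monotone l)
    (r : ℕ) (hr : r = (n - 1) / 2) (i : ℕ) (hi1 : 1 ≤ i) (hi2 : i ≤ r + 1) :
    2 * ((Finset.Icc 1 n).powerset.filter (fun J =>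
        Finset.Icc (n - i + 1) n ⊆ J ∧
        (∑ j ∈ J, l j < ∑ j ∈ Finset.Icc 1 n \ J, l j))).card +
      ((Finset.Icc 1 n).powerset.filter (fun J =>
        Finset.Icc (n - i + 1) n ⊆ J ∧
        (∑ j ∈ J, l j = ∑ j ∈ Finset.Icc 1 n \ J, l j))).card ≤
    2 ^ (n - i) - ∑ j ∈ Finset.Icc (r + 1 - i) r, (n - i).choose j :=
  short_median_intermediate_bound_general n hn l hl hmono r hr i hi2
end
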